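/- arXiv:1512.07073 — 2 statements merged into one kernel-verified Lean document; each statement's English description precedes it below -/
import Mathlib

section
/- Let T_s be the tent map with s ∈ (√2,2] and suppose x < y are adjacent turning points of T_s^r, i.e. T_s^m(x) = c and T_s^n(y) = c for some m,n < r, and T_s^r is monotone on [x,y]. Then there exists z > y such that T_s^r([y,z]) = [T_s^r(x), T_s^r(y)] (where the interval is taken with appropriate orientation). -/
noncomputable def tent (s : ℝ) : ℝ → ℝ := fun x => min (s * x) (s * (1 - x))

section aux
variable {s : ℝ}

lemma tent_cont : Continuous (tent s) :=
  (continuous_const.mul continuous_id).min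
    (continuous_const.mul (continuous_const.sub continuous_id))

lemma iter_cont (k : ℕ) : Continuous ((tent s)^[k]) := tent_cont.iterate k

lemma tent_symm (w : ℝ) : tent s (1 - w) = tent s w := by
  unfold tent
  rw [show (1 : ℝ) - (1 - w) = w by ring, min_comm]

lemma iter_symm (k : ℕ) (w : ℝ) : (tent s)^[k+1] (1 - w) = (tent s)^[k+1] w := by
  rw [Function.iterate_succ_apply, Function.iterate_succ_apply, tent_symm]

lemma tent_neg (hs0 : 0 < s) {w : ℝ} (hw : w < 0) : tent s w = s * w := by
  unfold tent
  exact min_eq_left (by nlinarith)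

lemma iter_neg (hs0 : 0 < s) {w : ℝ} (hw : w < 0) : ∀ k, (tent s)^[k] w < 0 := by
  intro k
  induction k generalizing w with
  | zero => simpa
  | succ k ih =>
    rw [Function.iterate_succ_apply, tent_neg hs0 hw]
    exact ih (mul_neg_of_pos_of_neg hs0 hw)

lemma tent_mem (hs0 : 0 < s) (hs2 : s ≤ 2) {w : ℝ} (hw : w ∈ Set.Icc (0:ℝ) 1) :
    tent s w ∈ Set.Icc (0:ℝ) 1 := by
  obtain ⟨h0, h1⟩ := hw
  constructor
  · exact le_min (by positivity) (by nlinarith)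
  · rcases le_total w (1/2) with h | h
    · calc tent s w ≤ s * w := min_le_left _ _
        _ ≤ 1 := by nlinarith
    · calc tent s w ≤ s * (1 - w) := min_le_right _ _
        _ ≤ 1 := by nlinarith

lemma orbit_mem (hs0 : 0 < s) (hs2 : s ≤ 2) {w : ℝ} {m : ℕ}
    (hm : (tent s)^[m] w = 1/2) : ∀ k, (tent s)^[k] w ∈ Set.Icc (0:ℝ) 1 := by
  have hB : ∀ j ≤ m, (tent s)^[j] w ∈ Set.Icc (0:ℝ) 1 := by
    intro j hj
    by_contra hout
    rcases lt_or_ge ((tent s)^[j] w) 0 with hneg | h0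
    · rcases eq_or_lt_of_le hj with rfl | hjm
      · rw [hm] at hneg; norm_num at hneg
      · have hlt : (tent s)^[m] w < 0 := by
          have h := iter_neg hs0 hneg (m - j)
          rwa [← Function.iterate_add_apply, Nat.sub_add_cancel hj] at h
        rw [hm] at hlt; norm_num at hlt
    · have h1 : 1 < (tent s)^[j] w := by
        by_contra h1'
        exact hout ⟨h0, le_of_not_gt h1'⟩
      have hnext : (tent s)^[j+1] w < 0 := by
        rw [Function.iterate_succ_apply']
        calc tent s ((tent s)^[j] w) ≤ s * (1 - (tent s)^[j] w) := min_le_right _ _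
          _ < 0 := by nlinarith
      rcases eq_or_lt_of_le hj with rfl | hjm
      · rw [hm] at h1; norm_num at h1
      · have hj1 : j + 1 ≤ m := hjm
        have hlt : (tent s)^[m] w < 0 := by
          have h := iter_neg hs0 hnext (m - (j+1))
          rwa [← Function.iterate_add_apply, Nat.sub_add_cancel hj1] at h
        rw [hm] at hlt; norm_num at hlt
  have hC : ∀ d, (tent s)^[m + d] w ∈ Set.Icc (0:ℝ) 1 := by
    intro d
    induction d with
    | zero => rw [Nat.add_zero, hm]; norm_num
    | succ d ih =>
      rw [show m + (d+1) = (m+d) + 1 by omega, Function.iterate_succ_apply']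
      exact tent_mem hs0 hs2 ih
  intro k
  rcases le_or_gt k m with h | h
  · exact hB k h
  · have := hC (k - m)
    rwa [Nat.add_sub_cancel' h.le] at this

lemma nonconst (hs0 : 0 < s) : ∀ (n : ℕ) {a b : ℝ}, a < b →
    ∃ t ∈ Set.Icc a b, (tent s)^[n] t ≠ (tent s)^[n] a := by
  intro n
  induction n with
  | zero =>
    intro a b hab
    exact ⟨b, ⟨hab.le, le_refl b⟩, by simpa using hab.ne'⟩
  | succ n ih =>
    intro a b hab
    by_contra hcon
    push_neg at hcon
    set c := (tent s)^[n+1] a with hc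
    have hval : ∀ t ∈ Set.Icc a b,
        (tent s)^[n] t = c / s ∨ (tent s)^[n] t = 1 - c / s := by
      intro t ht
      have h1 : tent s ((tent s)^[n] t) = c := by
        have h := hcon t ht
        rwa [Function.iterate_succ_apply'] at h
      have h1' : min (s * (tent s)^[n] t) (s * (1 - (tent s)^[n] t)) = c := h1
      rcases min_eq_iff.mp h1' with ⟨h2, _⟩ | ⟨h2, _⟩
      · left
        field_simp
        linarith
      · right
        field_simp
        linarith
    obtain ⟨t0, ht0, hne⟩ := ih hab
    set p := (tent s)^[n] a with hp
    set q := (tent s)^[n] t0 with hq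
    have hpq : p ≠ q := fun h => hne h.symm
    have hmid : (p+q)/2 ∈ Set.uIcc p q := by
      rcases le_total p q with h | h <;> rw [Set.mem_uIcc]
      · left; constructor <;> linarith
      · right; constructor <;> linarith
    obtain ⟨ξ, hξ, hξv⟩ := intermediate_value_uIcc (iter_cont n).continuousOn hmid
    have hIcc : Set.uIcc a t0 ⊆ Set.Icc a b := by
      rw [Set.uIcc_of_le ht0.1]
      exact Set.Icc_subset_Icc_right ht0.2
    have hav := hval a (Set.left_mem_Icc.mpr hab.le)
    have ht0v := hval t0 ht0
    have hξv2 := hval ξ (hIcc hξ)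
    rw [hξv] at hξv2
    rw [← hp] at hav
    rw [← hq] at ht0v
    rcases hav with h1 | h1 <;> rcases ht0v with h2 | h2 <;> rcases hξv2 with h3 | h3 <;>
      exact hpq (by linarith)

end aux

/-- A point `x` is a turning point of `T_s^r` if some earlier iterate maps it
to the critical point `c = 1/2`. -/
def IsTurningPoint (s : ℝ) (r : ℕ) (x : ℝ) : Prop :=
  ∃ m : ℕ, m < r ∧ (tent s)^[m] x = 1/2

/-- (Lemma 2.4) If `x < y` are adjacent turning points of `T_s^r` (both are
turning points and `T_s^r` is monotone on `[x,y]`), then there is `z > y`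
such that `T_s^r([y,z])` equals the interval between `T_s^r(x)` and
`T_s^r(y)`. -/
theorem adjacent_turning_points_image (s : ℝ) (hs : s ∈ Set.Ioc (Real.sqrt 2) 2)
    (r : ℕ) (x y : ℝ) (hxy : x < y)
    (hx : IsTurningPoint s r x) (hy : IsTurningPoint s r y)
    (hmono : MonotoneOn ((tent s)^[r]) (Set.Icc x y) ∨
      AntitoneOn ((tent s)^[r]) (Set.Icc x y)) :
    ∃ z : ℝ, y < z ∧
      (tent s)^[r] '' Set.Icc y z = Set.uIcc ((tent s)^[r] x) ((tent s)^[r] y) := by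
  obtain ⟨hsl, hs2⟩ := hs
  have hsqrt : (1:ℝ) < Real.sqrt 2 := by
    nlinarith [Real.sq_sqrt (by norm_num : (0:ℝ) ≤ 2), Real.sqrt_nonneg 2]
  have hs1 : (1:ℝ) < s := hsqrt.trans hsl
  have hs0 : (0:ℝ) < s := lt_trans one_pos hs1
  obtain ⟨m, hm, hmx⟩ := hx
  obtain ⟨n, hn, hny⟩ := hy
  obtain ⟨k', hk⟩ : ∃ k', r = (k' + 1) + n := ⟨r - n - 1, by omega⟩
  have hrn : ∀ t, (tent s)^[r] t = (tent s)^[k'+1] ((tent s)^[n] t) := by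
    intro t
    rw [hk, Function.iterate_add_apply]
  have gsymm : ∀ w : ℝ, (tent s)^[k'+1] (1 - w) = (tent s)^[k'+1] w := iter_symm k'
  set u : ℝ := (tent s)^[n] x with hu_def
  have hu : u ∈ Set.Icc (0:ℝ) 1 := orbit_mem hs0 hs2 hmx n
  have hy01 : y ∈ Set.Icc (0:ℝ) 1 := by
    have h := orbit_mem hs0 hs2 hny 0
    simpa using h
  -- degenerate case is impossible
  have hune : u ≠ 1/2 := by
    intro h
    have heq : (tent s)^[r] x = (tent s)^[r] y := by
      rw [hrn x, hrn y, hny, ← hu_def, h]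
    have hconst : ∀ t ∈ Set.Icc x y, (tent s)^[r] t = (tent s)^[r] x := by
      intro t ht
      have hxm : x ∈ Set.Icc x y := Set.left_mem_Icc.mpr hxy.le
      have hym : y ∈ Set.Icc x y := Set.right_mem_Icc.mpr hxy.le
      rcases hmono with hmo | hmo
      · exact le_antisymm (heq ▸ hmo ht hym ht.2) (hmo hxm ht ht.1)
      · exact le_antisymm (hmo hxm ht ht.1) (heq ▸ hmo ht hym ht.2)
    obtain ⟨t, ht, hne⟩ := nonconst hs0 r hxy
    exact hne (hconst t ht)
  set v : ℝ := min u (1 - u) with hv_def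
  have hv0 : 0 ≤ v := le_min hu.1 (by linarith [hu.2])
  have hvlt : v < 1/2 := by
    rcases lt_or_gt_of_ne hune with h | h
    · exact lt_of_le_of_lt (min_le_left _ _) h
    · exact lt_of_le_of_lt (min_le_right _ _) (by linarith)
  have hv2 : v ≤ 1/2 := hvlt.le
  set S : Set ℝ := Set.Ici y ∩ (tent s)^[n] ⁻¹' {v, 1 - v} with hS_def
  have hSmem : ∀ t : ℝ, t ∈ S ↔ y ≤ t ∧ ((tent s)^[n] t = v ∨ (tent s)^[n] t = 1 - v) := by
    intro t
    simp [hS_def, Set.mem_Ici]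
  have hSc : IsClosed S := by
    apply isClosed_Ici.inter
    exact IsClosed.preimage (iter_cont n) ((Set.finite_singleton (1-v)).insert v).isClosed
  have hSne : S.Nonempty := by
    rcases Nat.eq_zero_or_pos n with rfl | hn0
    · simp only [Function.iterate_zero_apply] at hny
      refine ⟨1 - v, (hSmem _).mpr ⟨by linarith, Or.inr ?_⟩⟩
      simp
    · have h2 : (tent s)^[n] 2 < 0 := by
        obtain ⟨n', rfl⟩ : ∃ n', n = n' + 1 := ⟨n - 1, by omega⟩
        rw [Function.iterate_succ_apply, show tent s 2 = s * (1 - 2) from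
          min_eq_right (by nlinarith)]
        exact iter_neg hs0 (by nlinarith) n'
      have hmem : v ∈ Set.uIcc ((tent s)^[n] y) ((tent s)^[n] 2) := by
        rw [hny, Set.mem_uIcc]
        right
        exact ⟨h2.le.trans hv0, hv2⟩
      obtain ⟨t, ht, htv⟩ := intermediate_value_uIcc (iter_cont n).continuousOn hmem
      rw [Set.uIcc_of_le (by linarith [hy01.2] : y ≤ 2)] at ht
      exact ⟨t, (hSmem _).mpr ⟨ht.1, Or.inl htv⟩⟩
  have hbdd : BddBelow S := ⟨y, fun t ht => ((hSmem t).mp ht).1⟩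
  set z : ℝ := sInf S with hz_def
  have hzS : z ∈ S := hSc.csInf_mem hSne hbdd
  have hzS' := (hSmem z).mp hzS
  have hz_min : ∀ t ∈ S, z ≤ t := fun t ht => csInf_le hbdd ht
  have hyz : y < z := by
    rcases lt_or_eq_of_le hzS'.1 with h | h
    · exact h
    · exfalso
      rcases hzS'.2 with hv' | hv' <;> rw [← h, hny] at hv' <;> linarith
  have hrange : ∀ t ∈ Set.Icc y z, v ≤ (tent s)^[n] t ∧ (tent s)^[n] t ≤ 1 - v := by
    intro t ht
    constructor
    · by_contra hlt
      push_neg at hlt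
      have hmem : v ∈ Set.uIcc ((tent s)^[n] y) ((tent s)^[n] t) := by
        rw [hny, Set.mem_uIcc]; right; exact ⟨hlt.le, hv2⟩
      obtain ⟨t', ht', ht'v⟩ := intermediate_value_uIcc (iter_cont n).continuousOn hmem
      rw [Set.uIcc_of_le ht.1] at ht'
      have hzt' : z ≤ t' := hz_min t' ((hSmem t').mpr ⟨ht'.1, Or.inl ht'v⟩)
      have ht't : t' = t := le_antisymm ht'.2 (ht.2.trans hzt')
      rw [ht't] at ht'v
      linarith
    · by_contra hlt
      push_neg at hlt
      have hmem : 1 - v ∈ Set.uIcc ((tent s)^[n] y) ((tent s)^[n] t) := by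
        rw [hny, Set.mem_uIcc]; left; exact ⟨by linarith, hlt.le⟩
      obtain ⟨t', ht', ht'v⟩ := intermediate_value_uIcc (iter_cont n).continuousOn hmem
      rw [Set.uIcc_of_le ht.1] at ht'
      have hzt' : z ≤ t' := hz_min t' ((hSmem t').mpr ⟨ht'.1, Or.inr ht'v⟩)
      have ht't : t' = t := le_antisymm ht'.2 (ht.2.trans hzt')
      rw [ht't] at ht'v
      linarith
  have hbound : ∀ ξ ∈ Set.Icc x y,
      (tent s)^[r] ξ ∈ Set.uIcc ((tent s)^[r] x) ((tent s)^[r] y) := by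
    intro ξ hξ
    have hxm : x ∈ Set.Icc x y := Set.left_mem_Icc.mpr hxy.le
    have hym : y ∈ Set.Icc x y := Set.right_mem_Icc.mpr hxy.le
    rcases hmono with hmo | hmo
    · rw [Set.mem_uIcc]; left; exact ⟨hmo hxm hξ hξ.1, hmo hξ hym hξ.2⟩
    · rw [Set.mem_uIcc]; right; exact ⟨hmo hξ hym hξ.2, hmo hxm hξ hξ.1⟩
  have hgJ0 : ∀ w : ℝ, v ≤ w → w ≤ 1/2 →
      (tent s)^[k'+1] w ∈ Set.uIcc ((tent s)^[r] x) ((tent s)^[r] y) := by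
    intro w hw1 hw2
    rcases le_total u (1/2) with hu2 | hu2
    · have hveq : v = u := min_eq_left (by linarith)
      have hmem : w ∈ Set.uIcc ((tent s)^[n] x) ((tent s)^[n] y) := by
        rw [hny, ← hu_def, Set.mem_uIcc]
        left
        exact ⟨by linarith [hveq ▸ hw1], hw2⟩
      obtain ⟨ξ, hξ, hξv⟩ := intermediate_value_uIcc (iter_cont n).continuousOn hmem
      rw [Set.uIcc_of_le hxy.le] at hξ
      have h : (tent s)^[r] ξ = (tent s)^[k'+1] w := by rw [hrn, hξv]
      rw [← h]
      exact hbound ξ hξ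
    · have hveq : v = 1 - u := min_eq_right (by linarith)
      have hmem : 1 - w ∈ Set.uIcc ((tent s)^[n] x) ((tent s)^[n] y) := by
        rw [hny, ← hu_def, Set.mem_uIcc]
        right
        constructor
        · linarith
        · have : v ≤ w := hw1
          linarith [hveq ▸ this]
      obtain ⟨ξ, hξ, hξv⟩ := intermediate_value_uIcc (iter_cont n).continuousOn hmem
      rw [Set.uIcc_of_le hxy.le] at hξ
      have h : (tent s)^[r] ξ = (tent s)^[k'+1] (1 - w) := by rw [hrn, hξv]
      rw [← gsymm w, ← h]
      exact hbound ξ hξ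
  have hgJ : ∀ w : ℝ, v ≤ w → w ≤ 1 - v →
      (tent s)^[k'+1] w ∈ Set.uIcc ((tent s)^[r] x) ((tent s)^[r] y) := by
    intro w hw1 hw2
    rcases le_total w (1/2) with hw | hw
    · exact hgJ0 w hw1 hw
    · rw [← gsymm w]
      exact hgJ0 (1 - w) (by linarith) (by linarith)
  have hzval : (tent s)^[r] z = (tent s)^[r] x := by
    have h1 : (tent s)^[k'+1] v = (tent s)^[k'+1] u := by
      rcases le_total u (1/2) with h | h
      · rw [hv_def, min_eq_left (by linarith)]
      · rw [hv_def, min_eq_right (by linarith), gsymm]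
    rw [hrn z, hrn x, ← hu_def]
    rcases hzS'.2 with h | h
    · rw [h, h1]
    · rw [h, gsymm, h1]
  refine ⟨z, hyz, Set.Subset.antisymm ?_ ?_⟩
  · rintro _ ⟨t, ht, rfl⟩
    obtain ⟨h1, h2⟩ := hrange t ht
    rw [hrn t]
    exact hgJ _ h1 h2
  · have hsub := intermediate_value_uIcc (a := y) (b := z) (f := (tent s)^[r])
      (iter_cont r).continuousOn
    rw [Set.uIcc_of_le hyz.le, hzval] at hsub
    rw [Set.uIcc_comm]
    exact hsub
end

section
/- Let T_s be the tent map with s ∈ (√2,2]. If the critical point c = 1/2 is non-recurrent (i.e. there is ε > 0 with |c − cₙ| ≥ ε for all n ≥ 1), then T_s is long-branched: there exists δ > 0 such that for every n ∈ ℕ and every pair of adjacent turning points x, y of T_sⁿ, one has |T_sⁿ(x) − T_sⁿ(y)| > δ. -/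
/-- `x < y` are adjacent turning points of `T_s^n` if both are turning points
and `T_s^n` is monotone on `[x,y]`. -/
def AdjacentTurningPoints (s : ℝ) (n : ℕ) (x y : ℝ) : Prop :=
  x < y ∧ IsTurningPoint s n x ∧ IsTurningPoint s n y ∧
    (MonotoneOn ((tent s)^[n]) (Set.Icc x y) ∨
      AntitoneOn ((tent s)^[n]) (Set.Icc x y))

open Set Function

def MonotoneOrAntitoneOn {α β : Type*} [Preorder α] [Preorder β] (f : α → β) (S : Set α) : Prop :=
  MonotoneOn f S ∨ AntitoneOn f S

namespace MonotoneOrAntitoneOn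

variable {α β γ : Type*} [Preorder α] [Preorder γ]

section Preorder

variable [Preorder β]

theorem mono {f : α → β} {S T : Set α} (hf : MonotoneOrAntitoneOn f S) (hTS : T ⊆ S) :
    MonotoneOrAntitoneOn f T :=
  hf.imp (·.mono hTS) (·.mono hTS)

theorem comp {f : β → γ} {g : α → β} {S : Set β} {T : Set α} (hf : MonotoneOrAntitoneOn f S)
    (hg : Monotone g ∨ Antitone g) (hTS : MapsTo g T S) : MonotoneOrAntitoneOn (f ∘ g) T := by
  rcases hf with hf | hf <;> rcases hg with hg | hg
  exacts [.inl (hf.comp (hg.monotoneOn T) hTS), .inr (hf.comp_AntitoneOn (hg.antitoneOn T) hTS),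
    .inr (hf.comp_MonotoneOn (hg.monotoneOn T) hTS), .inl (hf.comp (hg.antitoneOn T) hTS)]

theorem congr {f g : α → β} {S : Set α} (hf : MonotoneOrAntitoneOn f S) (h : S.EqOn f g) :
    MonotoneOrAntitoneOn g S :=
  hf.imp (·.congr h) (·.congr h)

end Preorder

theorem eq_left_of_eq {β : Type*} [PartialOrder β] {f : α → β} {a b c : α}
    (hf : MonotoneOrAntitoneOn f (Icc a b)) (hab : f a = f b) (hc : c ∈ Icc a b) : f c = f a := by
  have ha : a ∈ Icc a b := left_mem_Icc.2 (hc.1.trans hc.2)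
  have hb : b ∈ Icc a b := right_mem_Icc.2 (hc.1.trans hc.2)
  rcases hf with hf | hf
  · exact le_antisymm (hab ▸ hf hc hb hc.2) (hf ha hc hc.1)
  · exact le_antisymm (hf ha hc hc.1) (hab ▸ hf hc hb hc.2)

end MonotoneOrAntitoneOn

section Tent

variable {s : ℝ}

theorem tent_of_le_half (hs : 0 ≤ s) {x : ℝ} (hx : x ≤ 1/2) : tent s x = s * x :=
  min_eq_left (by nlinarith)

theorem tent_of_half_le (hs : 0 ≤ s) {x : ℝ} (hx : 1/2 ≤ x) : tent s x = s * (1 - x) :=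
  min_eq_right (by nlinarith)

theorem tent_one_sub (x : ℝ) : tent s (1 - x) = tent s x := by
  simp only [tent, sub_sub_cancel, min_comm]

theorem iterate_succ_tent_one_sub (n : ℕ) (x : ℝ) :
    (tent s)^[n + 1] (1 - x) = (tent s)^[n + 1] x := by
  rw [iterate_succ_apply, iterate_succ_apply, tent_one_sub]

theorem abs_tent_sub_le (hs : 0 ≤ s) (x y : ℝ) : |tent s x - tent s y| ≤ s * |x - y| := by
  have h₁ : |s * x - s * y| = s * |x - y| := by rw [← mul_sub, abs_mul, abs_of_nonneg hs]
  have h₂ : |s * (1 - x) - s * (1 - y)| = s * |x - y| := by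
    rw [← mul_sub, abs_mul, abs_of_nonneg hs, sub_sub_sub_cancel_left, abs_sub_comm]
  exact (abs_min_sub_min_le_max _ _ _ _).trans_eq (by rw [h₁, h₂, max_self])

theorem abs_iterate_tent_sub_le (hs : 0 ≤ s) (n : ℕ) (x y : ℝ) :
    |(tent s)^[n] x - (tent s)^[n] y| ≤ s ^ n * |x - y| := by
  induction n generalizing x y with
  | zero => simp
  | succ n ih =>
    calc |(tent s)^[n + 1] x - (tent s)^[n + 1] y|
        ≤ s ^ n * |tent s x - tent s y| := by simpa only [iterate_succ_apply] using ih _ _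
      _ ≤ s ^ n * (s * |x - y|) := by gcongr; exact abs_tent_sub_le hs x y
      _ = s ^ (n + 1) * |x - y| := by ring

theorem abs_tent_sub_tent (hs : 0 ≤ s) {x y : ℝ} (hxy : x ≤ y) (hside : y ≤ 1/2 ∨ 1/2 ≤ x) :
    |tent s x - tent s y| = s * |x - y| := by
  rcases hside with hy | hx
  · rw [tent_of_le_half hs (hxy.trans hy), tent_of_le_half hs hy, ← mul_sub, abs_mul,
      abs_of_nonneg hs]
  · rw [tent_of_half_le hs hx, tent_of_half_le hs (hx.trans hxy), ← mul_sub, abs_mul,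
      abs_of_nonneg hs, sub_sub_sub_cancel_left, abs_sub_comm]

theorem exists_tent_rightInvOn (hs : 0 < s) {x y : ℝ} (hxy : x ≤ y) (hside : y ≤ 1/2 ∨ 1/2 ≤ x) :
    ∃ g : ℝ → ℝ, (Monotone g ∨ Antitone g) ∧ MapsTo g (uIcc (tent s x) (tent s y)) (Icc x y) ∧
      RightInvOn g (tent s) (uIcc (tent s x) (tent s y)) := by
  rcases hside with hy | hx
  · have hI : uIcc (tent s x) (tent s y) = Icc (s * x) (s * y) := by
      rw [tent_of_le_half hs.le (hxy.trans hy), tent_of_le_half hs.le hy,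
        uIcc_of_le (by gcongr)]
    have hmaps : MapsTo (· / s) (Icc (s * x) (s * y)) (Icc x y) := fun w hw =>
      ⟨(le_div_iff₀ hs).2 (by linarith [hw.1]), (div_le_iff₀ hs).2 (by linarith [hw.2])⟩
    refine ⟨(· / s), .inl fun _ _ h => div_le_div_of_nonneg_right h hs.le, hI ▸ hmaps,
      hI ▸ fun w hw => ?_⟩
    rw [tent_of_le_half hs.le ((hmaps hw).2.trans hy), mul_div_cancel₀ _ hs.ne']
  · have hI : uIcc (tent s x) (tent s y) = Icc (s * (1 - y)) (s * (1 - x)) := by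
      rw [tent_of_half_le hs.le hx, tent_of_half_le hs.le (hx.trans hxy),
        uIcc_of_ge (by gcongr)]
    have hmaps : MapsTo (fun w => 1 - w / s) (Icc (s * (1 - y)) (s * (1 - x))) (Icc x y) :=
      fun w hw => ⟨by linarith [(div_le_iff₀ hs).2 (by linarith [hw.2] : w ≤ (1 - x) * s)],
        by linarith [(le_div_iff₀ hs).2 (by linarith [hw.1] : (1 - y) * s ≤ w)]⟩
    refine ⟨fun w => 1 - w / s, .inr fun _ _ h => sub_le_sub_left
      (div_le_div_of_nonneg_right h hs.le) 1, hI ▸ hmaps, hI ▸ fun w hw => ?_⟩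
    rw [tent_of_half_le hs.le (hx.trans (hmaps hw).1), sub_sub_cancel, mul_div_cancel₀ _ hs.ne']

theorem MonotoneOrAntitoneOn.iterate_tent_of_succ (hs : 0 < s) {n : ℕ} {x y : ℝ} (hxy : x ≤ y)
    (hside : y ≤ 1/2 ∨ 1/2 ≤ x) (h : MonotoneOrAntitoneOn (tent s)^[n + 1] (Icc x y)) :
    MonotoneOrAntitoneOn (tent s)^[n] (uIcc (tent s x) (tent s y)) := by
  obtain ⟨g, hg, hmaps, hinv⟩ := exists_tent_rightInvOn hs hxy hside
  exact (h.comp hg hmaps).congr fun w hw => by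
    rw [comp_apply, iterate_succ_apply, hinv hw]

theorem abs_iterate_tent_sub_of_monotoneOrAntitoneOn (hs : 0 < s) {n : ℕ} {x y : ℝ}
    (h : MonotoneOrAntitoneOn (tent s)^[n] (uIcc x y)) :
    |(tent s)^[n] x - (tent s)^[n] y| = s ^ n * |x - y| := by
  induction n generalizing x y with
  | zero => simp
  | succ n ih =>
    wlog hxy : x ≤ y generalizing x y
    · rw [abs_sub_comm, abs_sub_comm x]
      exact this (uIcc_comm x y ▸ h) (le_of_not_ge hxy)
    rw [uIcc_of_le hxy] at h
    have one_sided : ∀ {a b : ℝ}, a ≤ b → (b ≤ 1/2 ∨ 1/2 ≤ a) →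
        MonotoneOrAntitoneOn (tent s)^[n + 1] (Icc a b) →
        |(tent s)^[n + 1] a - (tent s)^[n + 1] b| = s ^ (n + 1) * |a - b| := by
      intro a b hab hside hmono
      rw [iterate_succ_apply, iterate_succ_apply, ih (hmono.iterate_tent_of_succ hs hab hside),
        abs_tent_sub_tent hs.le hab hside, pow_succ, mul_assoc]
    by_cases hy : y ≤ 1/2
    · exact one_sided hxy (.inl hy) h
    by_cases hx : 1/2 ≤ x
    · exact one_sided hxy (.inr hx) h
    push Not at hx hy
    exfalso
    set t := min (1/2 - x) (y - 1/2)
    have ht : 0 < t := lt_min (by linarith) (by linarith)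
    have hsub : Icc (1/2 - t) (1/2 + t) ⊆ Icc x y :=
      Icc_subset_Icc (by linarith [min_le_left (1/2 - x) (y - 1/2)])
        (by linarith [min_le_right (1/2 - x) (y - 1/2)])
    have hfold : (tent s)^[n + 1] (1/2) = (tent s)^[n + 1] (1/2 - t) :=
      (h.mono hsub).eq_left_of_eq (by rw [← iterate_succ_tent_one_sub]; ring_nf)
        ⟨by linarith, by linarith⟩
    have hexp := one_sided (a := 1/2 - t) (b := 1/2) (by linarith) (.inl le_rfl)
      (h.mono (hsub.trans' (Icc_subset_Icc le_rfl (by linarith))))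
    rw [hfold, sub_self, abs_zero, show (1/2 - t - 1/2 : ℝ) = -t by ring, abs_neg,
      abs_of_pos ht] at hexp
    have : 0 < s ^ (n + 1) * t := by positivity
    linarith

end Tent

section TurningPoints

variable {s ε : ℝ}

theorem le_abs_iterate_tent_sub_of_lt (hnr : ∀ k : ℕ, 1 ≤ k → ε ≤ |1/2 - (tent s)^[k] (1/2)|)
    {a b : ℕ} {x y : ℝ} (hab : a < b)
    (hx : (tent s)^[a] x = 1/2) (hy : (tent s)^[b] y = 1/2) :
    ε ≤ |(tent s)^[b] x - (tent s)^[b] y| := by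
  have : (tent s)^[b] x = (tent s)^[b - a] (1/2) := by
    rw [← hx, ← iterate_add_apply, Nat.sub_add_cancel hab.le]
  rw [this, hy, abs_sub_comm]
  exact hnr _ (by omega)

theorem IsTurningPoint.iterate_eq_or_exists_le_abs_sub
    (hnr : ∀ k : ℕ, 1 ≤ k → ε ≤ |1/2 - (tent s)^[k] (1/2)|) {n : ℕ} {x y : ℝ}
    (hx : IsTurningPoint s n x) (hy : IsTurningPoint s n y) :
    (tent s)^[n] x = (tent s)^[n] y ∨ ∃ m < n, ε ≤ |(tent s)^[m] x - (tent s)^[m] y| := by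
  obtain ⟨a, ha, hxa⟩ := hx
  obtain ⟨b, hb, hyb⟩ := hy
  rcases lt_trichotomy a b with hab | rfl | hab
  · exact .inr ⟨b, hb, le_abs_iterate_tent_sub_of_lt hnr hab hxa hyb⟩
  · left
    rw [← Nat.sub_add_cancel ha.le, iterate_add_apply, iterate_add_apply, hxa, hyb]
  · exact .inr ⟨a, ha, abs_sub_comm (α := ℝ) .. ▸ le_abs_iterate_tent_sub_of_lt hnr hab hyb hxa⟩

end TurningPoints

/-- If the critical point `c = 1/2` of `T_s`, `s ∈ (√2,2]`, is non-recurrent,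
then `T_s` is long-branched: there is `δ > 0` such that the images of any pair
of adjacent turning points of `T_s^n` are more than `δ` apart. -/
theorem nonrecurrent_implies_long_branched (s : ℝ)
    (hs : s ∈ Set.Ioc (Real.sqrt 2) 2)
    (hnr : ∃ ε > 0, ∀ n : ℕ, 1 ≤ n → ε ≤ |1/2 - (tent s)^[n] (1/2)|) :
    ∃ δ > 0, ∀ n : ℕ, ∀ x y : ℝ, AdjacentTurningPoints s n x y →
      δ < |(tent s)^[n] x - (tent s)^[n] y| := by
  obtain ⟨ε, hε, hnr⟩ := hnr
  have hs₁ : 1 < s := Real.one_lt_sqrt_two.trans hs.1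
  refine ⟨ε, hε, fun n x y ⟨hxy, hx, hy, hmono⟩ => ?_⟩
  have hexp := abs_iterate_tent_sub_of_monotoneOrAntitoneOn (by linarith)
    (uIcc_of_le hxy.le ▸ hmono : MonotoneOrAntitoneOn (tent s)^[n] (uIcc x y))
  have hpos : 0 < s ^ n * |x - y| := by
    have := abs_pos.2 (sub_ne_zero.2 hxy.ne)
    positivity
  rcases hx.iterate_eq_or_exists_le_abs_sub hnr hy with heq | ⟨m, hm, hεm⟩
  · rw [heq, sub_self, abs_zero] at hexp
    linarith
  · calc ε < s ^ (n - m) * ε := lt_mul_of_one_lt_left hε (one_lt_pow₀ hs₁ (by omega))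
      _ ≤ s ^ (n - m) * (s ^ m * |x - y|) := by
        gcongr
        exact hεm.trans (abs_iterate_tent_sub_le (by linarith) m x y)
      _ = s ^ n * |x - y| := by rw [← mul_assoc, ← pow_add, Nat.sub_add_cancel hm.le]
      _ = |(tent s)^[n] x - (tent s)^[n] y| := hexp.symm
end
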